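/- arXiv:2310.17595 — 5 statements merged into one kernel-verified Lean document; each statement's English description precedes it below -/
import Mathlib

section
/- Let A and C be Lie subalgebras of a Lie algebra L over a field 𝔽. If C is a Lie ideal of the Lie subalgebra ⟨A ∪ C⟩ generated by A ∪ C, then ⟨A ∪ C⟩ = span_𝔽(A ∪ C), the 𝔽-linear span of A ∪ C. -/
/-! Since `⁅A, C⁆ ⊆ C`, the bracket of `a + c` and `a' + c'` is `⁅a, a'⁆` plus terms in `C`, so
the linear span `A + C` of `A ∪ C` is already closed under the bracket, hence equals `⟨A ∪ C⟩`. -/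

universe u v

/-- `C` is an ideal of the Lie subalgebra `S`: `C ≤ S` and `⁅S, C⁆ ⊆ C`. -/
def IsIdealIn {𝔽 : Type u} [Field 𝔽] {L : Type v} [LieRing L] [LieAlgebra 𝔽 L]
    (C S : LieSubalgebra 𝔽 L) : Prop :=
  C ≤ S ∧ ∀ x ∈ C, ∀ y ∈ S, ⁅y, x⁆ ∈ C

namespace LieSubalgebra

variable {R : Type*} {L : Type*} [CommRing R] [LieRing L] [LieAlgebra R L]

theorem coe_lieSpan_eq_span_of_lie_mem_span {s : Set L}
    (h : ∀ x ∈ Submodule.span R s, ∀ y ∈ Submodule.span R s, ⁅x, y⁆ ∈ Submodule.span R s) :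
    (lieSpan R L s : Set L) = Submodule.span R s := by
  let K : LieSubalgebra R L :=
    { Submodule.span R s with lie_mem' := fun hx hy => h _ hx _ hy }
  have hle : lieSpan R L s ≤ K := lieSpan_le.mpr Submodule.subset_span
  exact le_antisymm hle (submodule_span_le_lieSpan (R := R))

theorem span_union_eq_sup (A C : LieSubalgebra R L) :
    Submodule.span R ((A : Set L) ∪ C) = A.toSubmodule ⊔ C.toSubmodule := by
  rw [Submodule.span_union, ← coe_toSubmodule A, ← coe_toSubmodule C,
    Submodule.span_eq, Submodule.span_eq]

theorem lie_mem_sup_of_lie_mem_right {A C : LieSubalgebra R L}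
    (hAC : ∀ a ∈ A, ∀ c ∈ C, ⁅a, c⁆ ∈ C) {x y : L}
    (hx : x ∈ A.toSubmodule ⊔ C.toSubmodule) (hy : y ∈ A.toSubmodule ⊔ C.toSubmodule) :
    ⁅x, y⁆ ∈ A.toSubmodule ⊔ C.toSubmodule := by
  obtain ⟨a, ha, c, hc, rfl⟩ := Submodule.mem_sup.mp hx
  obtain ⟨a', ha', c', hc', rfl⟩ := Submodule.mem_sup.mp hy
  have hC : ⁅a, c'⁆ + (⁅c, a'⁆ + ⁅c, c'⁆) ∈ C := by
    refine add_mem (hAC a ha c' hc') (add_mem ?_ (C.lie_mem hc hc'))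
    rw [← lie_skew]
    exact neg_mem (hAC a' ha' c hc)
  have hexpand : ⁅a + c, a' + c'⁆ = ⁅a, a'⁆ + (⁅a, c'⁆ + (⁅c, a'⁆ + ⁅c, c'⁆)) := by
    rw [lie_add, add_lie, add_lie]
    abel
  rw [hexpand]
  exact Submodule.add_mem_sup (A.lie_mem ha ha') hC

theorem coe_lieSpan_union_eq_span_of_lie_mem {A C : LieSubalgebra R L}
    (hAC : ∀ a ∈ A, ∀ c ∈ C, ⁅a, c⁆ ∈ C) :
    (lieSpan R L ((A : Set L) ∪ C) : Set L) = Submodule.span R ((A : Set L) ∪ C) := by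
  refine coe_lieSpan_eq_span_of_lie_mem_span fun x hx y hy => ?_
  rw [span_union_eq_sup] at hx hy ⊢
  exact lie_mem_sup_of_lie_mem_right hAC hx hy

end LieSubalgebra

/-- If `A` and `C` are Lie subalgebras of `L` and `C` is a Lie ideal of the subalgebra
`⟨A ∪ C⟩`, then `⟨A ∪ C⟩ = span_𝔽(A ∪ C)`. -/
theorem lieSpan_eq_span_of_ideal
    (𝔽 : Type u) [Field 𝔽] (L : Type v) [LieRing L] [LieAlgebra 𝔽 L]
    (A C : LieSubalgebra 𝔽 L)
    (hC : IsIdealIn C (LieSubalgebra.lieSpan 𝔽 L ((A : Set L) ∪ (C : Set L)))) :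
    (LieSubalgebra.lieSpan 𝔽 L ((A : Set L) ∪ (C : Set L)) : Set L)
      = (Submodule.span 𝔽 ((A : Set L) ∪ (C : Set L)) : Set L) :=
  LieSubalgebra.coe_lieSpan_union_eq_span_of_lie_mem fun a ha c hc =>
    hC.2 c hc a (LieSubalgebra.subset_lieSpan (Set.mem_union_left _ ha))
end

section
/- Let C be a Lie subalgebra of a Lie algebra L over a field 𝔽 and let a₁, …, aₙ ∈ L. If for each m = 1, …, n the subalgebra ⟨C ∪ {a₁,…,a_{m−1}}⟩ is a Lie ideal of ⟨C ∪ {a₁,…,a_m}⟩ (with the m = 1 case reading: C is an ideal of ⟨C ∪ {a₁}⟩), then for every m ≤ n one has ⟨C ∪ {a₁,…,a_m}⟩ = span_𝔽(C ∪ {a₁,…,a_m}). -/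
/-!
By induction on `m`: the hypothesis says that `a m` normalizes `H = ⟨C a₀ ⋯ a_{m-1}⟩`, and for
`x` in the normalizer of a Lie subalgebra `H` the submodule `𝔽 x + H` is already closed under the
bracket, so `⟨C a₀ ⋯ aₘ⟩ = 𝔽 aₘ + H`, which is the linear span once `H` is.
-/

universe u v

namespace LieSubalgebra

variable {R L : Type*} [CommRing R] [LieRing L] [LieAlgebra R L]

theorem coe_lieSpan_insert_eq_span {s : Set L} {x : L}
    (hs : (lieSpan R L s : Set L) = Submodule.span R s) (hx : x ∈ (lieSpan R L s).normalizer) :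
    (lieSpan R L (insert x s) : Set L) = Submodule.span R (insert x s) := by
  have hspan : Submodule.span R (insert x s) = R ∙ x ⊔ (lieSpan R L s).toSubmodule := by
    rw [Submodule.span_insert, ← Submodule.ext (Set.ext_iff.mp hs)]
  obtain ⟨K, hK⟩ := (Submodule.span R (insert x s)).exists_lieSubalgebra_coe_eq_iff.mpr <| by
    rw [hspan]
    exact fun _ _ => lie_mem_sup_of_mem_normalizer hx
  refine le_antisymm ?_ submodule_span_le_lieSpan
  rw [← hK, coe_toSubmodule, SetLike.coe_subset_coe, lieSpan_le, ← coe_toSubmodule, hK]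
  exact Submodule.subset_span

end LieSubalgebra

theorem IsIdealIn.le_normalizer {𝔽 : Type u} [Field 𝔽] {L : Type v} [LieRing L] [LieAlgebra 𝔽 L]
    {C S : LieSubalgebra 𝔽 L} (h : IsIdealIn C S) : S ≤ C.normalizer :=
  fun y hy => (C.mem_normalizer_iff y).mpr fun x hx => h.2 x hx y hy

/-- If `C ⊴ ⟨C a₁⟩ ⊴ ⟨C a₁ a₂⟩ ⊴ ⋯ ⊴ ⟨C a₁ ⋯ aₙ⟩` then
`⟨C a₁ ⋯ aₘ⟩ = span_𝔽(C ∪ {a₁, …, aₘ})` for all `m ≤ n`. -/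
theorem chain_lieSpan_eq_span
    (𝔽 : Type u) [Field 𝔽] (L : Type v) [LieRing L] [LieAlgebra 𝔽 L]
    (C : LieSubalgebra 𝔽 L) (n : ℕ) (a : ℕ → L)
    (h : ∀ m < n, IsIdealIn
        (LieSubalgebra.lieSpan 𝔽 L ((C : Set L) ∪ a '' {i | i < m}))
        (LieSubalgebra.lieSpan 𝔽 L ((C : Set L) ∪ a '' {i | i < m + 1}))) :
    ∀ m ≤ n,
      (LieSubalgebra.lieSpan 𝔽 L ((C : Set L) ∪ a '' {i | i < m}) : Set L)
        = (Submodule.span 𝔽 ((C : Set L) ∪ a '' {i | i < m}) : Set L) := by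
  have insert_succ (m : ℕ) :
      (C : Set L) ∪ a '' {i | i < m + 1} = insert (a m) ((C : Set L) ∪ a '' {i | i < m}) := by
    rw [← Set.union_insert, ← Set.image_insert_eq]
    exact congrArg (fun I => (C : Set L) ∪ a '' I) (Order.Iio_succ_eq_insert m)
  intro m hm
  induction m with
  | zero =>
    simp only [Nat.not_lt_zero, Set.ofPred_false, Set.image_empty, Set.union_empty,
      LieSubalgebra.lieSpan_eq]
    exact congrArg SetLike.coe (Submodule.span_eq C.toSubmodule).symm
  | succ m ih =>
    have hideal := h m hm
    rw [insert_succ] at hideal ⊢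
    exact LieSubalgebra.coe_lieSpan_insert_eq_span (ih (by omega))
      (hideal.le_normalizer (LieSubalgebra.subset_lieSpan (Set.mem_insert _ _)))
end

section
/- Let E be a Lie subalgebra of a Lie algebra L over a field 𝔽 and let a, b ∈ L be single elements. Then E is a Lie ideal of ⟨E ∪ {a}⟩ and of ⟨E ∪ {b}⟩ if and only if E is a Lie ideal of ⟨E ∪ {a,b}⟩. -/
universe u v

/-- For single elements `a, b`, the subalgebra `E` is a Lie ideal of `⟨E ∪ {a}⟩` and of
`⟨E ∪ {b}⟩` if and only if it is a Lie ideal of `⟨E ∪ {a, b}⟩`. -/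
theorem isIdeal_pair_iff
    (𝔽 : Type u) [Field 𝔽] (L : Type v) [LieRing L] [LieAlgebra 𝔽 L]
    (E : LieSubalgebra 𝔽 L) (a b : L) :
    (IsIdealIn E (LieSubalgebra.lieSpan 𝔽 L ((E : Set L) ∪ {a})) ∧
     IsIdealIn E (LieSubalgebra.lieSpan 𝔽 L ((E : Set L) ∪ {b}))) ↔
    IsIdealIn E (LieSubalgebra.lieSpan 𝔽 L ((E : Set L) ∪ {a, b})) := by
  have hEsub : ∀ s : Set L, E ≤ LieSubalgebra.lieSpan 𝔽 L ((E : Set L) ∪ s) := by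
    intro s x hx
    exact LieSubalgebra.subset_lieSpan (Set.mem_union_left _ hx)
  constructor
  · rintro ⟨⟨_, ha⟩, ⟨_, hb⟩⟩
    refine ⟨hEsub _, ?_⟩
    have hspan : LieSubalgebra.lieSpan 𝔽 L ((E : Set L) ∪ {a, b}) ≤ E.normalizer := by
      apply LieSubalgebra.lieSpan_le.mpr
      rintro y (hy | hy | hy)
      · exact SetLike.mem_coe.mpr (E.le_normalizer hy)
      · subst hy
        rw [SetLike.mem_coe, LieSubalgebra.mem_normalizer_iff]
        intro z hz
        exact ha z hz y (LieSubalgebra.subset_lieSpan (Set.mem_union_right _ rfl))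
      · rw [Set.mem_singleton_iff] at hy; subst hy
        rw [SetLike.mem_coe, LieSubalgebra.mem_normalizer_iff]
        intro z hz
        exact hb z hz y (LieSubalgebra.subset_lieSpan (Set.mem_union_right _ rfl))
    intro x hx y hy
    exact (LieSubalgebra.mem_normalizer_iff _ _).mp (hspan hy) x hx
  · rintro ⟨_, h⟩
    have hmono : ∀ c ∈ ({a, b} : Set L),
        LieSubalgebra.lieSpan 𝔽 L ((E : Set L) ∪ {c}) ≤
          LieSubalgebra.lieSpan 𝔽 L ((E : Set L) ∪ {a, b}) := by
      intro c hc
      apply LieSubalgebra.lieSpan_mono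
      exact Set.union_subset_union_right _ (Set.singleton_subset_iff.mpr hc)
    exact ⟨⟨hEsub _, fun x hx y hy => h x hx y (hmono a (by simp) hy)⟩,
           ⟨hEsub _, fun x hx y hy => h x hx y (hmono b (by simp) hy)⟩⟩
end

section
/- Let 𝔽 be a field and c ≥ 1. Let A, B, C be finite-dimensional 𝔽-vector spaces, each equipped with a flag V = P₁(V) ⊇ P₂(V) ⊇ ⋯ ⊇ P_{c+1}(V) = 0 of subspaces, and let i : A → B and j : A → C be injective flag-preserving linear maps (meaning a ∈ P_k(A) ⟺ i(a) ∈ P_k(B), and likewise for j). Then there exist a finite-dimensional 𝔽-vector space D with a flag D = P₁(D) ⊇ ⋯ ⊇ P_{c+1}(D) = 0 and injective flag-preserving linear maps i' : B → D and j' : C → D with i' ∘ i = j' ∘ j. (The class of finite-dimensional flagged 𝔽-vector spaces has the amalgamation property.) -/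
universe u v w

/-- A bundled finite- or infinite-dimensional 𝔽-vector space with a flag of subspaces
`V = P 1 ⊇ P 2 ⊇ ⋯ ⊇ P (c+1) = 0`. -/
structure FlagModule (𝔽 : Type u) [Field 𝔽] (c : ℕ) : Type (max u (v + 1)) where
  carrier : Type v
  [addCommGroup : AddCommGroup carrier]
  [module : Module 𝔽 carrier]
  P : ℕ → Submodule 𝔽 carrier
  P_one : P 1 = ⊤
  P_bot : ∀ k, c + 1 ≤ k → P k = ⊥
  P_anti : ∀ ⦃i j : ℕ⦄, i ≤ j → P j ≤ P i

attribute [instance] FlagModule.addCommGroup FlagModule.module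

/-- The class of finite-dimensional flagged 𝔽-vector spaces has the amalgamation property:
given injective flag-preserving linear maps `i : A → B` and `j : A → C`, there are a
finite-dimensional flagged space `D` and injective flag-preserving linear maps
`i' : B → D`, `j' : C → D` with `i' ∘ i = j' ∘ j`. -/
theorem flagModule_amalgamation
    (𝔽 : Type u) [Field 𝔽] (c : ℕ) (hc : 1 ≤ c)
    (A B C : FlagModule.{u, v} 𝔽 c)
    (hA : FiniteDimensional 𝔽 A.carrier) (hB : FiniteDimensional 𝔽 B.carrier)
    (hC : FiniteDimensional 𝔽 C.carrier)
    (i : A.carrier →ₗ[𝔽] B.carrier) (j : A.carrier →ₗ[𝔽] C.carrier)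
    (hi : Function.Injective i) (hj : Function.Injective j)
    (hiP : ∀ (k : ℕ) (a : A.carrier), i a ∈ B.P k ↔ a ∈ A.P k)
    (hjP : ∀ (k : ℕ) (a : A.carrier), j a ∈ C.P k ↔ a ∈ A.P k) :
    ∃ (D : FlagModule.{u, v} 𝔽 c), FiniteDimensional 𝔽 D.carrier ∧
      ∃ (i' : B.carrier →ₗ[𝔽] D.carrier) (j' : C.carrier →ₗ[𝔽] D.carrier),
        Function.Injective i' ∧ Function.Injective j' ∧
        (∀ (k : ℕ) (b : B.carrier), i' b ∈ D.P k ↔ b ∈ B.P k) ∧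
        (∀ (k : ℕ) (x : C.carrier), j' x ∈ D.P k ↔ x ∈ C.P k) ∧
        (∀ a : A.carrier, i' (i a) = j' (j a)) := by
  classical
  haveI := hA; haveI := hB; haveI := hC
  set W : Submodule 𝔽 (B.carrier × C.carrier) := LinearMap.range (i.prod (-j)) with hW
  let q : (B.carrier × C.carrier) →ₗ[𝔽] _ := W.mkQ
  have memW : ∀ x : B.carrier × C.carrier,
      x ∈ W ↔ ∃ a : A.carrier, i a = x.1 ∧ -(j a) = x.2 := by
    intro x
    constructor
    · rintro ⟨a, rfl⟩
      exact ⟨a, rfl, rfl⟩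
    · rintro ⟨a, h1, h2⟩
      exact ⟨a, Prod.ext h1 h2⟩
  refine ⟨⟨(B.carrier × C.carrier) ⧸ W,
      fun k => Submodule.map q ((B.P k).prod (C.P k)), ?_, ?_, ?_⟩, ?_,
      q.comp (LinearMap.inl 𝔽 _ _), q.comp (LinearMap.inr 𝔽 _ _), ?_, ?_, ?_, ?_, ?_⟩
  · show Submodule.map q ((B.P 1).prod (C.P 1)) = ⊤
    rw [B.P_one, C.P_one, Submodule.prod_top, Submodule.map_top, Submodule.range_mkQ]
  · intro k hk
    show Submodule.map q ((B.P k).prod (C.P k)) = ⊥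
    rw [B.P_bot k hk, C.P_bot k hk, Submodule.prod_bot, Submodule.map_bot]
  · intro k l hkl
    exact Submodule.map_mono (Submodule.prod_mono (B.P_anti hkl) (C.P_anti hkl))
  · infer_instance
  · -- injectivity of i'
    rw [← LinearMap.ker_eq_bot]
    rw [Submodule.eq_bot_iff]
    intro b hb
    simp only [LinearMap.mem_ker, LinearMap.comp_apply, LinearMap.inl_apply] at hb
    have : ((b, 0) : B.carrier × C.carrier) ∈ W := by
      rwa [Submodule.mkQ_apply, Submodule.Quotient.mk_eq_zero] at hb
    obtain ⟨a, h1, h2⟩ := (memW _).1 this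
    have ha : a = 0 := hj (by simpa using congrArg Neg.neg h2)
    rw [ha] at h1; simpa using h1.symm
  · -- injectivity of j'
    rw [← LinearMap.ker_eq_bot]
    rw [Submodule.eq_bot_iff]
    intro x hx
    simp only [LinearMap.mem_ker, LinearMap.comp_apply, LinearMap.inr_apply] at hx
    have : ((0, x) : B.carrier × C.carrier) ∈ W := by
      rwa [Submodule.mkQ_apply, Submodule.Quotient.mk_eq_zero] at hx
    obtain ⟨a, h1, h2⟩ := (memW _).1 this
    have ha : a = 0 := hi (by simpa using h1)
    rw [ha] at h2; simpa using h2.symm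
  · -- flag preservation for i'
    intro k b
    constructor
    · rintro ⟨⟨b', c'⟩, ⟨hb', hc'⟩, heq⟩
      have : ((b', c') - (b, 0) : B.carrier × C.carrier) ∈ W :=
        (Submodule.Quotient.eq W).1 heq
      obtain ⟨a, h1, h2⟩ := (memW _).1 this
      simp only [Prod.fst_sub, Prod.snd_sub, sub_zero] at h1 h2
      have hja : j a ∈ C.P k := by
        have : -(j a) ∈ C.P k := h2 ▸ hc'
        simpa using (C.P k).neg_mem this
      have hia : i a ∈ B.P k := (hiP k a).2 ((hjP k a).1 hja)
      have : b = b' - i a := by rw [h1]; exact (sub_sub_cancel b' b).symm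
      rw [this]
      exact (B.P k).sub_mem hb' hia
    · intro hb
      exact ⟨(b, 0), ⟨hb, (C.P k).zero_mem⟩, rfl⟩
  · -- flag preservation for j'
    intro k x
    constructor
    · rintro ⟨⟨b', c'⟩, ⟨hb', hc'⟩, heq⟩
      have : ((b', c') - (0, x) : B.carrier × C.carrier) ∈ W :=
        (Submodule.Quotient.eq W).1 heq
      obtain ⟨a, h1, h2⟩ := (memW _).1 this
      simp only [Prod.fst_sub, Prod.snd_sub, sub_zero] at h1 h2
      have hia : i a ∈ B.P k := h1 ▸ hb'
      have hja : j a ∈ C.P k := (hjP k a).2 ((hiP k a).1 hia)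
      have : x = c' + j a := by
        have := congrArg (fun t => c' - t) h2
        simpa [sub_sub_cancel, sub_neg_eq_add] using this.symm
      rw [this]
      exact (C.P k).add_mem hc' hja
    · intro hx
      exact ⟨(0, x), ⟨(B.P k).zero_mem, hx⟩, rfl⟩
  · -- commuting square
    intro a
    exact (Submodule.Quotient.eq W).2 ((memW _).2 ⟨a, by simp, by simp⟩)
end

section
/- Let 𝔽 be a field and c ≥ 2. Let L be the free c-nilpotent Lie algebra over 𝔽 on the generating set {b_X : X ⊆ ℕ^{c−1}} ∪ {a_{i,j} : 0 ≤ i ≤ c−2, j ∈ ℕ}, i.e., the quotient of the free Lie algebra on these generators by the (c+1)-st term of its lower central series. Let I be the 𝔽-linear span in L of the set of left-normed brackets {⁅b_X, a_{0,j₀}, a_{1,j₁}, …, a_{c−2,j_{c−2}}⁆ : X ⊆ ℕ^{c−1} and (j₀,…,j_{c−2}) ∈ X}. Then I is a Lie ideal of L, and for every X ⊆ ℕ^{c−1} and every (j₀,…,j_{c−2}) ∈ ℕ^{c−1}, the element ⁅b_X, a_{0,j₀}, …, a_{c−2,j_{c−2}}⁆ lies in I if and only if (j₀,…,j_{c−2})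 ∈ X. -/
/-!
Each spanning bracket `⁅b_X, a_{0,j₀}, …, a_{c-2,j_{c-2}}⁆` has degree `c`, so its bracket with
anything lies in the `(c+1)`-st term of the lower central series: `I` is central, hence an
ideal. For the membership criterion, send `b_X ↦ E_{0,1}`, `a_{i,jᵢ} ↦ E_{i+1,i+2}` and every
other generator to `0` in the strictly upper triangular `(c+1) × (c+1)` matrices. These form a
`c`-nilpotent Lie algebra, so the map factors through `L`; it kills every spanning bracket
`⁅b_Y, a_{0,k₀}, …⁆` with `(Y, k) ≠ (X, j)` and sends `⁅b_X, a_{0,j₀}, …⁆` to `E_{0,c} ≠ 0`.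
-/

universe u

/-- The free `c`-nilpotent Lie algebra over `𝔽` on a set `S`: the quotient of the free Lie
algebra on `S` by the `(c+1)`-st term of its lower central series (which is
`lowerCentralSeries 𝔽 _ _ c` in Mathlib's 0-based indexing). -/
abbrev FreeNilpotentLieAlgebra (𝔽 : Type u) [Field 𝔽] (c : ℕ) (S : Type u) :=
  FreeLieAlgebra 𝔽 S ⧸
    LieModule.lowerCentralSeries 𝔽 (FreeLieAlgebra 𝔽 S) (FreeLieAlgebra 𝔽 S) c

/-- Left-normed iterated bracket: `leftBracket x [y₁, …, yₙ] = ⁅…⁅⁅x, y₁⁆, y₂⁆, …, yₙ⁆`. -/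
def leftBracket {L : Type u} [LieRing L] : L → List L → L
  | x, [] => x
  | x, y :: ys => leftBracket ⁅x, y⁆ ys

/-- Indexing type for the generators `b_X` (for `X ⊆ ℕ^{c-1}`) and `a_{i,j}`
(for `0 ≤ i ≤ c-2`, `j ∈ ℕ`). -/
abbrev GenIdx (c : ℕ) : Type :=
  Set (Fin (c - 1) → ℕ) ⊕ (Fin (c - 1) × ℕ)

attribute [local instance] LieRing.ofAssociativeRing

open Fin.NatCast LieModule Matrix

section LeftBracket

variable {L L' : Type*} [LieRing L] [LieRing L']

lemma leftBracket_append (x : L) (l₁ l₂ : List L) :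
    leftBracket x (l₁ ++ l₂) = leftBracket (leftBracket x l₁) l₂ := by
  induction l₁ generalizing x with
  | nil => rfl
  | cons y ys ih => exact ih ⁅x, y⁆

lemma leftBracket_zero (l : List L) : leftBracket (0 : L) l = 0 := by
  induction l with
  | nil => rfl
  | cons y ys ih => rwa [leftBracket, zero_lie]

lemma leftBracket_eq_zero_of_zero_mem {l : List L} (h : (0 : L) ∈ l) (x : L) :
    leftBracket x l = 0 := by
  obtain ⟨l₁, l₂, rfl⟩ := List.append_of_mem h
  rw [leftBracket_append, leftBracket, lie_zero, leftBracket_zero]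

lemma map_leftBracket {f : L → L'} (hf : ∀ x y, f ⁅x, y⁆ = ⁅f x, f y⁆) (x : L) (l : List L) :
    f (leftBracket x l) = leftBracket (f x) (l.map f) := by
  induction l generalizing x with
  | nil => rfl
  | cons y ys ih => simp only [leftBracket, List.map_cons, ih, hf]

variable {R : Type*} [CommRing R] [LieAlgebra R L]

lemma leftBracket_mem_lowerCentralSeries {k : ℕ} {x : L} (hx : x ∈ lowerCentralSeries R L L k)
    (l : List L) : leftBracket x l ∈ lowerCentralSeries R L L (k + l.length) := by
  induction l generalizing k x with
  | nil => exact hx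
  | cons y ys ih =>
    rw [List.length_cons, ← add_assoc, add_right_comm]
    apply ih
    rw [LieModule.lowerCentralSeries_succ, ← lie_skew]
    exact neg_mem (LieSubmodule.lie_mem_lie (LieSubmodule.mem_top y) hx)

end LeftBracket

lemma lie_mk_eq_zero_of_mem_lowerCentralSeries {R L : Type*} [CommRing R] [LieRing L]
    [LieAlgebra R L] {c k : ℕ} (hkc : c ≤ k + 1) {x : L} (hx : x ∈ lowerCentralSeries R L L k)
    (y : L ⧸ lowerCentralSeries R L L c) :
    ⁅y, (LieSubmodule.Quotient.mk x : L ⧸ lowerCentralSeries R L L c)⁆ = 0 := by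
  obtain ⟨w, rfl⟩ := LieSubmodule.Quotient.surjective_mk' _ y
  rw [LieSubmodule.Quotient.mk'_apply, ← LieSubmodule.Quotient.mk_bracket,
    LieSubmodule.Quotient.mk_eq_zero']
  refine antitone_lowerCentralSeries R L L hkc ?_
  rw [LieModule.lowerCentralSeries_succ]
  exact LieSubmodule.lie_mem_lie (LieSubmodule.mem_top w) hx

namespace Matrix

lemma lie_single_single {ι R : Type*} [Fintype ι] [DecidableEq ι] [Ring R] {i j k : ι}
    (h : k ≠ i) (a b : R) : ⁅single i j a, single j k b⁆ = single i k (a * b) := by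
  simp [Ring.lie_def, h]

variable (R : Type*) [CommRing R] (n : ℕ)

def aboveSuperdiag (k : ℕ) : Submodule R (Matrix (Fin (n + 1)) (Fin (n + 1)) R) where
  carrier := {A | ∀ i j : Fin (n + 1), (j : ℕ) ≤ i + k → A i j = 0}
  add_mem' hA hB i j h := by simp [hA i j h, hB i j h]
  zero_mem' _ _ _ := rfl
  smul_mem' t A hA i j h := by simp [hA i j h]

variable {R n}

lemma mul_mem_aboveSuperdiag {a b : ℕ} {A B : Matrix (Fin (n + 1)) (Fin (n + 1)) R}
    (hA : A ∈ aboveSuperdiag R n a) (hB : B ∈ aboveSuperdiag R n b) :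
    A * B ∈ aboveSuperdiag R n (a + b + 1) := by
  intro i j h
  refine (mul_apply (M := A)).trans (Finset.sum_eq_zero fun l _ => ?_)
  by_cases hl : (l : ℕ) ≤ i + a
  · rw [hA i l hl, zero_mul]
  · rw [hB l j (by omega), mul_zero]

lemma lie_mem_aboveSuperdiag {a b : ℕ} {A B : Matrix (Fin (n + 1)) (Fin (n + 1)) R}
    (hA : A ∈ aboveSuperdiag R n a) (hB : B ∈ aboveSuperdiag R n b) :
    ⁅A, B⁆ ∈ aboveSuperdiag R n (a + b + 1) := by
  rw [Ring.lie_def]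
  exact sub_mem (mul_mem_aboveSuperdiag hA hB) (add_comm a b ▸ mul_mem_aboveSuperdiag hB hA)

lemma eq_zero_of_mem_aboveSuperdiag {A : Matrix (Fin (n + 1)) (Fin (n + 1)) R}
    (h : A ∈ aboveSuperdiag R n n) : A = 0 :=
  ext fun i j => h i j (by omega)

variable (R n)

def strictUpper : LieSubalgebra R (Matrix (Fin (n + 1)) (Fin (n + 1)) R) :=
  { aboveSuperdiag R n 0 with
    lie_mem' := fun hA hB i j h => lie_mem_aboveSuperdiag hA hB i j (by omega) }

variable {R n}

lemma single_mem_strictUpper {a b : ℕ} (hab : a < b) (hb : b ≤ n) (r : R) :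
    single (a : Fin (n + 1)) (b : Fin (n + 1)) r ∈ strictUpper R n := by
  rintro i j h
  apply single_apply_of_ne
  rintro ⟨rfl, rfl⟩
  rw [Fin.val_cast_of_lt (by omega), Fin.val_cast_of_lt (by omega)] at h
  omega

lemma coe_mem_aboveSuperdiag_of_mem_lowerCentralSeries {L : Type*} [LieRing L] [LieAlgebra R L]
    (f : L →ₗ⁅R⁆ strictUpper R n) {k : ℕ} {x : L} (hx : x ∈ lowerCentralSeries R L L k) :
    (f x : Matrix (Fin (n + 1)) (Fin (n + 1)) R) ∈ aboveSuperdiag R n k := by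
  induction k generalizing x with
  | zero => exact (f x).2
  | succ k ih =>
    rw [LieModule.lowerCentralSeries_succ, ← LieSubmodule.mem_toSubmodule,
      LieSubmodule.lieIdeal_oper_eq_linear_span'] at hx
    refine Submodule.span_le (p := (aboveSuperdiag R n (k + 1)).comap
      ((strictUpper R n).incl.comp f).toLinearMap) |>.mpr ?_ hx
    rintro _ ⟨y, -, u, hu, rfl⟩
    simpa using lie_mem_aboveSuperdiag (f y).2 (ih hu)

lemma leftBracket_single_chain {m : ℕ} (hm : m + 1 ≤ n) :
    leftBracket (single 0 1 1 : Matrix (Fin (n + 1)) (Fin (n + 1)) R)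
        (List.ofFn fun i : Fin m => single ((i + 1 : ℕ) : Fin (n + 1)) ((i + 2 : ℕ)) 1) =
      single 0 ((m + 1 : ℕ) : Fin (n + 1)) 1 := by
  induction m with
  | zero => simp [leftBracket]
  | succ m ih =>
    rw [List.ofFn_succ', List.concat_eq_append, leftBracket_append]
    simp only [Fin.val_castSucc, Fin.val_last]
    rw [ih (by omega), leftBracket, leftBracket, lie_single_single, one_mul]
    intro h
    have := congrArg Fin.val h
    rw [Fin.val_cast_of_lt (by omega)] at this
    simp at this

end Matrix

section Generators

variable (R : Type*) [CommRing R] {c : ℕ}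

local notation "𝔏" => FreeLieAlgebra R (GenIdx c)

noncomputable def freeBracket (X : Set (Fin (c - 1) → ℕ)) (jj : Fin (c - 1) → ℕ) : 𝔏 :=
  leftBracket (FreeLieAlgebra.of R (Sum.inl X))
    (List.ofFn fun i => FreeLieAlgebra.of R (Sum.inr (i, jj i)))

lemma lie_mk_freeBracket_eq_zero (hc : 1 ≤ c) (X : Set (Fin (c - 1) → ℕ))
    (jj : Fin (c - 1) → ℕ) (y : 𝔏 ⧸ lowerCentralSeries R 𝔏 𝔏 c) :
    ⁅y, LieSubmodule.Quotient.mk (N := lowerCentralSeries R 𝔏 𝔏 c) (freeBracket R X jj)⁆ = 0 :=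
  have hmem := leftBracket_mem_lowerCentralSeries (R := R) (k := 0) (by simp)
    (List.ofFn fun i => FreeLieAlgebra.of R (Sum.inr (i, jj i)))
  lie_mk_eq_zero_of_mem_lowerCentralSeries (by simp; omega) hmem y

open Classical in
noncomputable def chainGen (X : Set (Fin (c - 1) → ℕ)) (jj : Fin (c - 1) → ℕ) :
    GenIdx c → Matrix (Fin (c + 1)) (Fin (c + 1)) R
  | .inl Y => if Y = X then single 0 1 1 else 0
  | .inr (i, k) => if k = jj i then single ((i + 1 : ℕ) : Fin (c + 1)) ((i + 2 : ℕ)) 1 else 0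

lemma chainGen_mem_strictUpper (hc : 1 ≤ c) (X : Set (Fin (c - 1) → ℕ))
    (jj : Fin (c - 1) → ℕ) (s : GenIdx c) : chainGen R X jj s ∈ strictUpper R c := by
  rcases s with Y | ⟨i, k⟩
  · dsimp only [chainGen]; split_ifs
    · simpa using single_mem_strictUpper (R := R) (a := 0) (b := 1) one_pos hc 1
    · exact zero_mem _
  · dsimp only [chainGen]; split_ifs
    · exact single_mem_strictUpper (by omega) (by omega) 1
    · exact zero_mem _

noncomputable def chainHom (hc : 1 ≤ c) (X : Set (Fin (c - 1) → ℕ)) (jj : Fin (c - 1) → ℕ) :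
    𝔏 →ₗ⁅R⁆ strictUpper R c :=
  FreeLieAlgebra.lift R fun s => ⟨chainGen R X jj s, chainGen_mem_strictUpper R hc X jj s⟩

lemma chainHom_freeBracket (hc : 1 ≤ c) (X Y : Set (Fin (c - 1) → ℕ))
    (jj kk : Fin (c - 1) → ℕ) :
    (chainHom R hc X jj (freeBracket R Y kk) : Matrix (Fin (c + 1)) (Fin (c + 1)) R) =
      if Y = X ∧ kk = jj then single 0 (c : Fin (c + 1)) 1 else 0 := by
  classical
  let φ (x : 𝔏) : Matrix (Fin (c + 1)) (Fin (c + 1)) R := chainHom R hc X jj x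
  have hlie (x y) : φ ⁅x, y⁆ = ⁅φ x, φ y⁆ := by simp [φ]
  change φ _ = _
  rw [freeBracket, map_leftBracket hlie, List.map_ofFn]
  simp only [Function.comp_def, φ, chainHom, FreeLieAlgebra.lift_of_apply]
  by_cases hY : Y = X
  · subst hY
    by_cases hk : kk = jj
    · subst hk
      simp only [chainGen, if_true, and_self]
      rw [leftBracket_single_chain (by omega), Nat.sub_add_cancel hc]
    · obtain ⟨i, hi⟩ := Function.ne_iff.mp hk
      rw [if_neg (by tauto)]
      exact leftBracket_eq_zero_of_zero_mem (List.mem_ofFn.mpr ⟨i, by simp [chainGen, hi]⟩) _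
  · simp [chainGen, hY, leftBracket_zero]

lemma mk_freeBracket_mem_span_iff [Nontrivial R] (hc : 1 ≤ c) (X : Set (Fin (c - 1) → ℕ))
    (jj : Fin (c - 1) → ℕ) :
    LieSubmodule.Quotient.mk (N := lowerCentralSeries R 𝔏 𝔏 c) (freeBracket R X jj) ∈
        Submodule.span R {z | ∃ Y kk, kk ∈ Y ∧ z = LieSubmodule.Quotient.mk (freeBracket R Y kk)} ↔
      jj ∈ X := by
  refine ⟨fun hmem => ?_, fun hjj => Submodule.subset_span ⟨X, jj, hjj, rfl⟩⟩
  by_contra hX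
  let ψ := (lowerCentralSeries R 𝔏 𝔏 c).toSubmodule.liftQ
    ((strictUpper R c).incl.comp (chainHom R hc X jj)).toLinearMap fun _ hx =>
      eq_zero_of_mem_aboveSuperdiag (coe_mem_aboveSuperdiag_of_mem_lowerCentralSeries _ hx)
  have hψ (Y : Set (Fin (c - 1) → ℕ)) (kk : Fin (c - 1) → ℕ) :
      ψ (LieSubmodule.Quotient.mk (freeBracket R Y kk)) =
        if Y = X ∧ kk = jj then single 0 (c : Fin (c + 1)) 1 else 0 :=
    chainHom_freeBracket R hc X Y jj kk
  have hker : Submodule.span R {z | ∃ Y kk, kk ∈ Y ∧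
      z = LieSubmodule.Quotient.mk (freeBracket R Y kk)} ≤ LinearMap.ker ψ := by
    refine Submodule.span_le.mpr ?_
    rintro _ ⟨Y, kk, hkk, rfl⟩
    rw [SetLike.mem_coe, LinearMap.mem_ker, hψ, if_neg]
    rintro ⟨rfl, rfl⟩
    exact hX hkk
  have h := LinearMap.mem_ker.mp (hker hmem)
  rw [hψ, if_pos ⟨rfl, rfl⟩] at h
  simpa using congrFun₂ h 0 c

end Generators

/-- In the free `c`-nilpotent Lie algebra `L` on the generators `b_X` (`X ⊆ ℕ^{c-1}`) and
`a_{i,j}`, the span `I` of the left-normed brackets `⁅b_X, a_{0,j₀}, …, a_{c-2,j_{c-2}}⁆`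
with `(j₀,…,j_{c-2}) ∈ X` is a Lie ideal of `L`, and
`⁅b_X, a_{0,j₀}, …, a_{c-2,j_{c-2}}⁆ ∈ I` iff `(j₀,…,j_{c-2}) ∈ X`. -/
theorem free_nilpotent_ideal_bracket_mem_iff
    (𝔽 : Type) [Field 𝔽] (c : ℕ) (hc : 2 ≤ c)
    (bgen : Set (Fin (c - 1) → ℕ) → FreeNilpotentLieAlgebra 𝔽 c (GenIdx c))
    (agen : Fin (c - 1) → ℕ → FreeNilpotentLieAlgebra 𝔽 c (GenIdx c))
    (hb : ∀ X, bgen X = LieSubmodule.Quotient.mk (N := LieModule.lowerCentralSeries 𝔽 _ _ c) (FreeLieAlgebra.of 𝔽 (Sum.inl X)))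
    (ha : ∀ i j, agen i j = LieSubmodule.Quotient.mk (N := LieModule.lowerCentralSeries 𝔽 _ _ c) (FreeLieAlgebra.of 𝔽 (Sum.inr (i, j))))
    (e : Set (Fin (c - 1) → ℕ) → (Fin (c - 1) → ℕ) → FreeNilpotentLieAlgebra 𝔽 c (GenIdx c))
    (he : ∀ X jj, e X jj = leftBracket (bgen X) (List.ofFn fun i => agen i (jj i)))
    (I : Submodule 𝔽 (FreeNilpotentLieAlgebra 𝔽 c (GenIdx c)))
    (hI : I = Submodule.span 𝔽 {z | ∃ X jj, jj ∈ X ∧ z = e X jj}) :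
    (∀ (y z : FreeNilpotentLieAlgebra 𝔽 c (GenIdx c)), z ∈ I → ⁅y, z⁆ ∈ I) ∧
    (∀ X jj, e X jj ∈ I ↔ jj ∈ X) := by
  have he_mk : e = fun X jj => LieSubmodule.Quotient.mk (freeBracket 𝔽 X jj) := by
    funext X jj
    rw [he, hb, freeBracket, map_leftBracket (f := LieSubmodule.Quotient.mk) (fun _ _ => rfl),
      List.map_ofFn]
    simp only [ha, Function.comp_def]
  subst he_mk hI
  refine ⟨fun y z hz => ?_, mk_freeBracket_mem_span_iff 𝔽 (by omega)⟩
  have hcentral : Submodule.span 𝔽 {z | ∃ X jj, jj ∈ X ∧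
      z = LieSubmodule.Quotient.mk (freeBracket 𝔽 X jj)} ≤ LinearMap.ker (LieAlgebra.ad 𝔽 _ y) :=
    Submodule.span_le.mpr fun _ ⟨X, jj, _, hz⟩ =>
      hz ▸ lie_mk_freeBracket_eq_zero 𝔽 (by omega) X jj y
  rw [show ⁅y, z⁆ = 0 from hcentral hz]
  exact zero_mem _
end
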